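/- (Farkas' Lemma) For a real m×n matrix A and vector b ∈ ℝᵐ, exactly one of the following holds: (i) there exists x ∈ ℝⁿ with A x ≤ b (componentwise), or (ii) there exists y ∈ ℝᵐ with y ≥ 0, yᵀA = 0, and yᵀb < 0. -/

import Mathlib

/-!
If `A x ≤ b` and `y ≥ 0` with `Aᵀ y = 0`, then `0 = (Aᵀ y) ⬝ x = y ⬝ (A x) ≤ y ⬝ b`, so the two
alternatives exclude each other. Conversely, if no certificate `y` exists, the point `(0, -1)`
lies outside the cone `{(Aᵀ y, b ⬝ y) | y ≥ 0}` in `ℝⁿ × ℝ`. This cone is the image of the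
nonnegative orthant under a linear map, hence closed (when the map is not injective on the
relevant coordinates, a kernel vector lets one coefficient be pushed to zero, so induct on the
support). A functional `φ(u, t) = w ⬝ u + c t` therefore separates it from `(0, -1)`; then
`c > 0`, and `x = -w / c` solves `A x ≤ b`.
-/

open Matrix

section NonnegOrthant

variable {ι : Type*}

def vanishingOutside (s : Finset ι) : Submodule ℝ (ι → ℝ) :=
  Submodule.pi (↑s)ᶜ fun _ => ⊥

@[simp]
theorem mem_vanishingOutside {s : Finset ι} {y : ι → ℝ} :
    y ∈ vanishingOutside s ↔ ∀ i ∉ s, y i = 0 := by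
  simp [vanishingOutside, Submodule.mem_pi]

variable [Fintype ι]

theorem exists_sub_smul_nonneg_and_eq_zero {y c : ι → ℝ} (hy : 0 ≤ y) (hc : ∃ i, 0 < c i) :
    ∃ (t : ℝ) (j : ι), 0 < c j ∧ 0 ≤ y - t • c ∧ (y - t • c) j = 0 := by
  classical
  obtain ⟨j, hj, hmin⟩ := (Finset.univ.filter fun i => 0 < c i).exists_min_image
    (fun i => y i / c i) (by simpa [Finset.filter_nonempty_iff] using hc)
  simp only [Finset.mem_filter, Finset.mem_univ, true_and] at hj hmin
  refine ⟨y j / c j, j, hj, fun i => ?_, by simp [div_mul_cancel₀ _ hj.ne']⟩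
  simp only [Pi.zero_apply, Pi.sub_apply, Pi.smul_apply, smul_eq_mul, sub_nonneg]
  rcases lt_or_ge 0 (c i) with hci | hci
  · exact (le_div_iff₀ hci).1 (hmin i hci)
  · exact (mul_nonpos_of_nonneg_of_nonpos (div_nonneg (hy j) hj.le) hci).trans (hy i)

variable {E : Type*} [NormedAddCommGroup E] [NormedSpace ℝ E]

theorem isClosed_image_nonneg_inter_of_ker_domRestrict_eq_bot (f : (ι → ℝ) →ₗ[ℝ] E)
    (W : Submodule ℝ (ι → ℝ)) (hf : LinearMap.ker (f.domRestrict W) = ⊥) :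
    IsClosed (f '' {y | 0 ≤ y ∧ y ∈ W}) := by
  have himage : f '' {y | 0 ≤ y ∧ y ∈ W} = f.domRestrict W '' {z | 0 ≤ (z : ι → ℝ)} := by
    ext x
    constructor
    · rintro ⟨y, ⟨hy, hyW⟩, rfl⟩
      exact ⟨⟨y, hyW⟩, hy, rfl⟩
    · rintro ⟨z, hz, rfl⟩
      exact ⟨z, ⟨hz, z.2⟩, rfl⟩
  rw [himage]
  exact (LinearMap.isClosedEmbedding_of_injective hf).isClosedMap _
    (isClosed_Ici.preimage continuous_subtype_val)

theorem isClosed_image_nonneg_vanishingOutside (f : (ι → ℝ) →ₗ[ℝ] E) (s : Finset ι) :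
    IsClosed (f '' {y | 0 ≤ y ∧ y ∈ vanishingOutside s}) := by
  classical
  induction s using Finset.strongInduction with | H s ih => ?_
  by_cases hker : LinearMap.ker (f.domRestrict (vanishingOutside s)) = ⊥
  · exact isClosed_image_nonneg_inter_of_ker_domRestrict_eq_bot f _ hker
  obtain ⟨c, hcs, hfc, hc⟩ : ∃ c ∈ vanishingOutside s, f c = 0 ∧ ∃ i, 0 < c i := by
    obtain ⟨⟨c, hcs⟩, hfc, hc0⟩ := (Submodule.ne_bot_iff _).1 hker
    obtain ⟨i, hi⟩ := Function.ne_iff.1 (Subtype.coe_ne_coe.2 hc0)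
    rcases hi.lt_or_gt with hneg | hpos
    · exact ⟨-c, neg_mem hcs, by simpa using hfc, i, by simpa using hneg⟩
    · exact ⟨c, hcs, hfc, i, hpos⟩
  -- Every nonnegative combination can be shifted along `c` until one coefficient vanishes.
  have hunion : f '' {y | 0 ≤ y ∧ y ∈ vanishingOutside s}
      = ⋃ j ∈ s, f '' {y | 0 ≤ y ∧ y ∈ vanishingOutside (s.erase j)} := by
    refine subset_antisymm ?_ (Set.iUnion₂_subset fun j _ => Set.image_mono ?_)
    · rintro _ ⟨y, ⟨hy, hys⟩, rfl⟩
      obtain ⟨t, j, hcj, hnonneg, hzero⟩ := exists_sub_smul_nonneg_and_eq_zero hy hc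
      have hjs : j ∈ s := by
        by_contra hjs
        exact hcj.ne' (mem_vanishingOutside.1 hcs j hjs)
      refine Set.mem_biUnion hjs ⟨y - t • c, ⟨hnonneg, ?_⟩, by simp [hfc]⟩
      rw [mem_vanishingOutside] at hcs hys ⊢
      intro i hi
      rcases eq_or_ne i j with rfl | hij
      · exact hzero
      · have his : i ∉ s := fun his => hi (Finset.mem_erase.2 ⟨hij, his⟩)
        simp [hys i his, hcs i his]
    · rintro y ⟨hy, hys⟩
      exact ⟨hy, mem_vanishingOutside.2 fun i hi =>
        mem_vanishingOutside.1 hys i fun hi' => hi (Finset.mem_of_mem_erase hi')⟩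
  rw [hunion]
  exact isClosed_biUnion_finset fun j hj => ih _ (Finset.erase_ssubset hj)

theorem isClosed_image_nonneg (f : (ι → ℝ) →ₗ[ℝ] E) : IsClosed (f '' {y | 0 ≤ y}) := by
  simpa using isClosed_image_nonneg_vanishingOutside f Finset.univ

theorem exists_strongDual_nonneg_of_notMem_image_nonneg (f : (ι → ℝ) →ₗ[ℝ] E) {x₀ : E}
    (hx₀ : x₀ ∉ f '' {y | 0 ≤ y}) :
    ∃ φ : StrongDual ℝ E, (∀ y, 0 ≤ y → 0 ≤ φ (f y)) ∧ φ x₀ < 0 := by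
  let C : ProperCone ℝ E :=
    ⟨(PointedCone.positive ℝ (ι → ℝ)).map f, by simpa [Set.Ici_def] using isClosed_image_nonneg f⟩
  obtain ⟨φ, hφ, hφx₀⟩ := C.hyperplane_separation_point (x₀ := x₀) (by simpa [C] using hx₀)
  exact ⟨φ, fun y hy => hφ _ ⟨y, hy, rfl⟩, hφx₀⟩

end NonnegOrthant

namespace Matrix

variable {m n : Type*} [Fintype m] [Fintype n]

theorem dotProduct_nonneg_of_mulVec_le {R : Type*} [CommRing R] [PartialOrder R]
    [IsOrderedRing R] {A : Matrix m n R} {b : m → R} {x : n → R} {y : m → R}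
    (hx : A *ᵥ x ≤ b) (hy : 0 ≤ y) (hyA : Aᵀ *ᵥ y = 0) : 0 ≤ y ⬝ᵥ b :=
  calc 0 = (Aᵀ *ᵥ y) ⬝ᵥ x := by rw [hyA, zero_dotProduct]
    _ = y ⬝ᵥ (A *ᵥ x) := by rw [mulVec_transpose, dotProduct_mulVec]
    _ ≤ y ⬝ᵥ b := dotProduct_le_dotProduct_of_nonneg_left hx hy

theorem exists_mulVec_le_of_forall_dotProduct_nonneg (A : Matrix m n ℝ) (b : m → ℝ)
    (h : ∀ y, 0 ≤ y → Aᵀ *ᵥ y = 0 → 0 ≤ y ⬝ᵥ b) : ∃ x, A *ᵥ x ≤ b := by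
  classical
  let L : (m → ℝ) →ₗ[ℝ] (n → ℝ) × ℝ := Aᵀ.mulVecLin.prod (dotProductBilin ℝ ℝ b)
  have hL : ∀ y, L y = (Aᵀ *ᵥ y, b ⬝ᵥ y) := fun y => rfl
  have hx₀ : ((0 : n → ℝ), (-1 : ℝ)) ∉ L '' {y | 0 ≤ y} := by
    rintro ⟨y, hy, hLy⟩
    rw [hL, Prod.mk.injEq, dotProduct_comm] at hLy
    linarith [h y hy hLy.1]
  obtain ⟨φ, hφ, hφx₀⟩ := exists_strongDual_nonneg_of_notMem_image_nonneg L hx₀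
  set c := φ (0, 1)
  set w := (dotProductEquiv ℝ n).symm (φ.toLinearMap ∘ₗ LinearMap.inl ℝ _ ℝ)
  have hφ_apply : ∀ u t, φ (u, t) = w ⬝ᵥ u + t * c := by
    intro u t
    have hw : φ (u, 0) = w ⬝ᵥ u := by
      rw [← dotProductEquiv_apply_apply, LinearEquiv.apply_symm_apply]; rfl
    calc φ (u, t) = φ (u, 0) + t • φ (0, 1) := by
          rw [← map_smul, ← map_add, Prod.smul_mk, Prod.mk_add_mk, smul_zero, add_zero, zero_add,
            smul_eq_mul, mul_one]
      _ = w ⬝ᵥ u + t * c := by rw [hw, smul_eq_mul]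
  have hc : 0 < c := by
    have := hφ_apply 0 (-1)
    simp only [dotProduct_zero, zero_add, neg_mul, one_mul] at this
    linarith
  refine ⟨-c⁻¹ • w, fun i => ?_⟩
  have hi := hφ (Pi.single i 1) (Pi.single_nonneg.2 zero_le_one)
  rw [hL, hφ_apply, mulVec_single_one, dotProduct_single_one] at hi
  have hAw : (A *ᵥ w) i = w ⬝ᵥ Aᵀ.col i := by
    rw [col_transpose, dotProduct_comm]; rfl
  rw [mulVec_smul, Pi.smul_apply, smul_eq_mul, hAw]
  calc -c⁻¹ * (w ⬝ᵥ Aᵀ.col i) = b i - c⁻¹ * (w ⬝ᵥ Aᵀ.col i + b i * c) := by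
        field_simp; ring
    _ ≤ b i := sub_le_self _ (mul_nonneg (inv_nonneg.2 hc.le) hi)

end Matrix

/-- Farkas' lemma: exactly one of the two alternatives holds. -/
theorem stmt2 {m n : ℕ} (A : Matrix (Fin m) (Fin n) ℝ) (b : Fin m → ℝ) :
    Xor' (∃ x : Fin n → ℝ, ∀ i, A.mulVec x i ≤ b i)
      (∃ y : Fin m → ℝ, (∀ i, 0 ≤ y i) ∧ Aᵀ.mulVec y = 0 ∧ ∑ i, y i * b i < 0) := by
  refine xor_iff_iff_not.2 ⟨?_, fun hno => ?_⟩
  · rintro ⟨x, hx⟩ ⟨y, hy, hyA, hyb⟩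
    exact (dotProduct_nonneg_of_mulVec_le (b := b) hx hy hyA).not_gt hyb
  · refine exists_mulVec_le_of_forall_dotProduct_nonneg A b fun y hy hyA => ?_
    by_contra hyb
    exact hno ⟨y, hy, hyA, not_le.1 hyb⟩
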